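/- The negated inclusion atom x̄ ⊄ ȳ (where |x̄| = |ȳ|), with semantics M ⊨_X x̄ ⊄ ȳ iff there is s ∈ X such that s(x̄) ≠ s'(ȳ) for all s' ∈ X, is logically equivalent to ∃z̄ (=(z̄) ∧ ◇(z̄ = x̄) ∧ z̄ ≠ ȳ), assuming models have at least two elements. -/

import Mathlib

/-- Formulas of first-order logic with team semantics, in negation normal form,
over a relational signature `σ` (with arities `ar`) extended with dependency
atoms indexed by `δ` (with arities `dar`).  Equality and inequality literals
are between tuples of variables; variables are natural numbers. -/
inductive TForm (σ : Type) (ar : σ → ℕ) (δ : Type) (dar : δ → ℕ) : Type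
  | rel (r : σ) (ts : Fin (ar r) → ℕ)
  | nrel (r : σ) (ts : Fin (ar r) → ℕ)
  | eq (k : ℕ) (x y : Fin k → ℕ)
  | neq (k : ℕ) (x y : Fin k → ℕ)
  | dep (d : δ) (xs : Fin (dar d) → ℕ)
  | and (φ ψ : TForm σ ar δ dar)
  | or (φ ψ : TForm σ ar δ dar)
  | ex (v : ℕ) (φ : TForm σ ar δ dar)
  | all (v : ℕ) (φ : TForm σ ar δ dar)

/-- A team over a model with carrier `M`: a set of assignments. -/
abbrev Team (M : Type) := Set (ℕ → M)

/-- `X(x̄)`: the relation of values of the tuple `x̄` in the team `X`. -/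
def Team.rel {M : Type} (X : Team M) {k : ℕ} (xs : Fin k → ℕ) : Set (Fin k → M) :=
  {t | ∃ s ∈ X, t = fun i => s (xs i)}

/-- An interpretation of a family of dependencies: for each index, an
isomorphism-invariant-style class of pairs (carrier, relation). -/
abbrev DepFam (δ : Type) (dar : δ → ℕ) := ∀ d : δ, ∀ M : Type, Set (Fin (dar d) → M) → Prop

/-- Lax team semantics. -/
def tsat {σ : Type} {ar : σ → ℕ} {δ : Type} {dar : δ → ℕ} {M : Type}
    (RI : ∀ r : σ, Set (Fin (ar r) → M)) (DI : DepFam δ dar) :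
    TForm σ ar δ dar → Team M → Prop
  | .rel r ts, X => ∀ s ∈ X, (fun i => s (ts i)) ∈ RI r
  | .nrel r ts, X => ∀ s ∈ X, (fun i => s (ts i)) ∉ RI r
  | .eq _ x y, X => ∀ s ∈ X, (fun i => s (x i)) = fun i => s (y i)
  | .neq _ x y, X => ∀ s ∈ X, (fun i => s (x i)) ≠ fun i => s (y i)
  | .dep d xs, X => DI d M (X.rel xs)
  | .and φ ψ, X => tsat RI DI φ X ∧ tsat RI DI ψ X
  | .or φ ψ, X => ∃ Y Z, X = Y ∪ Z ∧ tsat RI DI φ Y ∧ tsat RI DI ψ Z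
  | .ex v φ, X => ∃ H : (ℕ → M) → Set M, (∀ s ∈ X, (H s).Nonempty) ∧
      tsat RI DI φ {s' | ∃ s ∈ X, ∃ m ∈ H s, s' = Function.update s v m}
  | .all v φ, X => tsat RI DI φ {s' | ∃ s ∈ X, ∃ m : M, s' = Function.update s v m}

/-- Tarski (single-assignment) semantics; dependency atoms are treated as
trivially true (they are only meaningful for first-order formulas). -/
def ssat {σ : Type} {ar : σ → ℕ} {δ : Type} {dar : δ → ℕ} {M : Type}
    (RI : ∀ r : σ, Set (Fin (ar r) → M)) :
    TForm σ ar δ dar → (ℕ → M) → Prop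
  | .rel r ts, s => (fun i => s (ts i)) ∈ RI r
  | .nrel r ts, s => (fun i => s (ts i)) ∉ RI r
  | .eq _ x y, s => (fun i => s (x i)) = fun i => s (y i)
  | .neq _ x y, s => (fun i => s (x i)) ≠ fun i => s (y i)
  | .dep _ _, _ => True
  | .and φ ψ, s => ssat RI φ s ∧ ssat RI ψ s
  | .or φ ψ, s => ssat RI φ s ∨ ssat RI ψ s
  | .ex v φ, s => ∃ m : M, ssat RI φ (Function.update s v m)
  | .all v φ, s => ∀ m : M, ssat RI φ (Function.update s v m)

/-- A formula is first-order if it contains no dependency atoms. -/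
def TForm.isFO {σ : Type} {ar : σ → ℕ} {δ : Type} {dar : δ → ℕ} :
    TForm σ ar δ dar → Prop
  | .dep _ _ => False
  | .and φ ψ => φ.isFO ∧ ψ.isFO
  | .or φ ψ => φ.isFO ∧ ψ.isFO
  | .ex _ φ => φ.isFO
  | .all _ φ => φ.isFO
  | _ => True

/-- Free variables of a formula. -/
def TForm.free {σ : Type} {ar : σ → ℕ} {δ : Type} {dar : δ → ℕ} :
    TForm σ ar δ dar → Set ℕ
  | .rel _ ts => Set.range ts
  | .nrel _ ts => Set.range ts
  | .eq _ x y => Set.range x ∪ Set.range y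
  | .neq _ x y => Set.range x ∪ Set.range y
  | .dep _ xs => Set.range xs
  | .and φ ψ => φ.free ∪ ψ.free
  | .or φ ψ => φ.free ∪ ψ.free
  | .ex v φ => φ.free \ {v}
  | .all v φ => φ.free \ {v}

/-- The flattening `φᶠ`: replace every dependency atom by the trivially true
atom `⊤` (here rendered as the empty-tuple equality). -/
def TForm.flatten {σ : Type} {ar : σ → ℕ} {δ : Type} {dar : δ → ℕ} :
    TForm σ ar δ dar → TForm σ ar δ dar
  | .dep _ _ => .eq 0 Fin.elim0 Fin.elim0
  | .and φ ψ => .and φ.flatten ψ.flatten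
  | .or φ ψ => .or φ.flatten ψ.flatten
  | .ex v φ => .ex v φ.flatten
  | .all v φ => .all v φ.flatten
  | φ => φ

/-- Negation normal form of the negation of a (first-order) formula. -/
def TForm.neg {σ : Type} {ar : σ → ℕ} {δ : Type} {dar : δ → ℕ} :
    TForm σ ar δ dar → TForm σ ar δ dar
  | .rel r ts => .nrel r ts
  | .nrel r ts => .rel r ts
  | .eq k x y => .neq k x y
  | .neq k x y => .eq k x y
  | .dep d xs => .dep d xs
  | .and φ ψ => .or φ.neg ψ.neg
  | .or φ ψ => .and φ.neg ψ.neg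
  | .ex v φ => .all v φ.neg
  | .all v φ => .ex v φ.neg

/-- `(ψ ↾ θ) := (¬θ) ∨ (θ ∧ ψ)`. -/
def TForm.restrict {σ : Type} {ar : σ → ℕ} {δ : Type} {dar : δ → ℕ}
    (ψ θ : TForm σ ar δ dar) : TForm σ ar δ dar :=
  .or θ.neg (.and θ ψ)

/-- A family of dependencies is upwards closed. -/
def UpClosed {δ : Type} {dar : δ → ℕ} (DI : DepFam δ dar) : Prop :=
  ∀ (d : δ) (M : Type) (R S : Set (Fin (dar d) → M)), R ⊆ S → DI d M R → DI d M S

/-- The constancy dependency of arity `n`. -/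
def ConstD (n : ℕ) : ∀ M : Type, Set (Fin n → M) → Prop :=
  fun _ R => ∀ t ∈ R, ∀ t' ∈ R, t = t'

/-- Iterated existential quantification (outermost quantifier is `v 0`). -/
def TForm.exs {σ : Type} {ar : σ → ℕ} {δ : Type} {dar : δ → ℕ} :
    {n : ℕ} → (Fin n → ℕ) → TForm σ ar δ dar → TForm σ ar δ dar
  | 0, _, φ => φ
  | _ + 1, v, φ => .ex (v 0) (TForm.exs (fun i => v i.succ) φ)

/-- The intersection dependency `◇(z̄ = x̄)` of arity `k + k`: some tuple in the
relation has its first half equal to its second half. -/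
def IntersectD (k : ℕ) : ∀ M : Type, Set (Fin (k + k) → M) → Prop :=
  fun _ R => ∃ t ∈ R, (fun i : Fin k => t (Fin.castAdd k i)) = fun i => t (Fin.natAdd k i)


/-!
Both directions go through the constant tuple `c := s(x̄)` of a witness `s ∈ X`.
If `s(x̄)` is missed by every `s'(ȳ)`, extend each assignment of `X` by `z̄ ↦ c`: then `z̄` is
constant, `s` itself gives `◇(z̄ = x̄)`, and `z̄ ≠ ȳ` holds everywhere. Conversely, constancy
forces `z̄` to take a single value `c` in the extended team, `◇(z̄ = x̄)` makes `c = s(x̄)` for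
some `s ∈ X`, and `z̄ ≠ ȳ` then says that no `s'(ȳ)` equals `c`. Freshness of `z̄` is what lets
the values of `x̄` and `ȳ` pass unchanged between `X` and the extended team.
-/

section UpdateSeq

variable {M : Type}

def updateSeq : {n : ℕ} → (ℕ → M) → (Fin n → ℕ) → (Fin n → M) → (ℕ → M)
  | 0, s, _, _ => s
  | _ + 1, s, z, c => updateSeq (Function.update s (z 0) (c 0)) (Fin.tail z) (Fin.tail c)

lemma notMem_range_fin_succ_iff {α : Type} {n : ℕ} {z : Fin (n + 1) → α} {v : α} :
    v ∉ Set.range z ↔ v ≠ z 0 ∧ v ∉ Set.range (Fin.tail z) := by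
  rw [Fin.range_fin_succ, Set.mem_insert_iff, not_or]

lemma updateSeq_of_notMem : ∀ {n : ℕ} (s : ℕ → M) (z : Fin n → ℕ) (c : Fin n → M)
    {v : ℕ}, v ∉ Set.range z → updateSeq s z c v = s v
  | 0, _, _, _, _, _ => rfl
  | _ + 1, s, z, c, _, hv => by
      obtain ⟨h0, htail⟩ := notMem_range_fin_succ_iff.mp hv
      rw [updateSeq, updateSeq_of_notMem _ _ _ htail, Function.update_of_ne h0]

lemma updateSeq_apply_of_injective : ∀ {n : ℕ} (s : ℕ → M) {z : Fin n → ℕ} (c : Fin n → M),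
    Function.Injective z → ∀ i, updateSeq s z c (z i) = c i
  | 0, _, _, _, _, i => i.elim0
  | _ + 1, s, z, c, hz, i => by
      rw [updateSeq]
      rcases Fin.eq_zero_or_eq_succ i with rfl | ⟨j, rfl⟩
      · have hfresh : z 0 ∉ Set.range (Fin.tail z) := by
          rintro ⟨j, hj⟩
          exact Fin.succ_ne_zero j (hz hj)
        rw [updateSeq_of_notMem _ _ _ hfresh, Function.update_self]
      · exact updateSeq_apply_of_injective _ _ (hz.comp (Fin.succ_injective _)) j

end UpdateSeq

section Exs

variable {σ : Type} {ar : σ → ℕ} {δ : Type} {dar : δ → ℕ} {M : Type}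
  (RI : ∀ r : σ, Set (Fin (ar r) → M)) (DI : DepFam δ dar)

lemma tsat_exs_of_tsat_updateSeq : ∀ {n : ℕ} (z : Fin n → ℕ) (c : Fin n → M)
    (φ : TForm σ ar δ dar) (X : Team M),
    tsat RI DI φ {s' | ∃ s ∈ X, s' = updateSeq s z c} → tsat RI DI (TForm.exs z φ) X
  | 0, z, c, φ, X, h => by
      have hX : {s' | ∃ s ∈ X, s' = updateSeq s z c} = X := by
        ext s'
        simp [updateSeq]
      rwa [hX] at h
  | _ + 1, z, c, φ, X, h => by
      refine ⟨fun _ => {c 0}, fun _ _ => Set.singleton_nonempty _, ?_⟩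
      refine tsat_exs_of_tsat_updateSeq (Fin.tail z) (Fin.tail c) φ _ ?_
      convert h using 1
      ext s'
      constructor
      · rintro ⟨_, ⟨s, hs, m, rfl, rfl⟩, rfl⟩
        exact ⟨s, hs, rfl⟩
      · rintro ⟨s, hs, rfl⟩
        exact ⟨_, ⟨s, hs, c 0, rfl, rfl⟩, rfl⟩

lemma exists_tsat_of_tsat_exs : ∀ {n : ℕ} (z : Fin n → ℕ) (φ : TForm σ ar δ dar) (X : Team M),
    tsat RI DI (TForm.exs z φ) X →
    ∃ Y : Team M, tsat RI DI φ Y ∧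
      (∀ s' ∈ Y, ∃ s ∈ X, ∀ v ∉ Set.range z, s' v = s v) ∧
      (∀ s ∈ X, ∃ s' ∈ Y, ∀ v ∉ Set.range z, s' v = s v)
  | 0, _, _, X, h =>
      ⟨X, h, fun s hs => ⟨s, hs, fun _ _ => rfl⟩, fun s hs => ⟨s, hs, fun _ _ => rfl⟩⟩
  | _ + 1, z, φ, X, ⟨H, hH, h⟩ => by
      obtain ⟨Y, hY, hproj, hlift⟩ := exists_tsat_of_tsat_exs (Fin.tail z) φ _ h
      refine ⟨Y, hY, fun s' hs' => ?_, fun s hs => ?_⟩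
      · obtain ⟨_, ⟨s, hs, m, -, rfl⟩, hagree⟩ := hproj s' hs'
        refine ⟨s, hs, fun v hv => ?_⟩
        obtain ⟨h0, htail⟩ := notMem_range_fin_succ_iff.mp hv
        rw [hagree v htail, Function.update_of_ne h0]
      · obtain ⟨m, hm⟩ := hH s hs
        obtain ⟨s', hs', hagree⟩ := hlift _ ⟨s, hs, m, hm, rfl⟩
        refine ⟨s', hs', fun v hv => ?_⟩
        obtain ⟨h0, htail⟩ := notMem_range_fin_succ_iff.mp hv
        rw [hagree v htail, Function.update_of_ne h0]

end Exs

section NegInclusion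

variable {σ : Type} {ar : σ → ℕ} {M : Type} (RI : ∀ r : σ, Set (Fin (ar r) → M))
  {k : ℕ} (x y z : Fin k → ℕ) (X : Team M)
  {DI : DepFam Bool (fun b => cond b (k + k) k)}

def negInclusionBody : TForm σ ar Bool (fun b => cond b (k + k) k) :=
  .and (.and (.dep false z) (.dep true (Fin.append z x))) (.neq k z y)

lemma tsat_negInclusion_of_exists (hDI₀ : DI false = ConstD k) (hDI₁ : DI true = IntersectD k)
    (hz : Function.Injective z) (hzx : ∀ i j, z i ≠ x j) (hzy : ∀ i j, z i ≠ y j)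
    (h : ∃ s ∈ X, ∀ s' ∈ X, (fun i => s (x i)) ≠ fun i => s' (y i)) :
    tsat RI DI (TForm.exs z (negInclusionBody x y z)) X := by
  obtain ⟨s₀, hs₀, hmiss⟩ := h
  set c : Fin k → M := fun i => s₀ (x i)
  have hx (s : ℕ → M) (j : Fin k) : updateSeq s z c (x j) = s (x j) :=
    updateSeq_of_notMem s z c fun ⟨i, hi⟩ => hzx i j hi
  have hy (s : ℕ → M) (j : Fin k) : updateSeq s z c (y j) = s (y j) :=
    updateSeq_of_notMem s z c fun ⟨i, hi⟩ => hzy i j hi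
  have hzc (s : ℕ → M) : (fun i => updateSeq s z c (z i)) = c :=
    funext (updateSeq_apply_of_injective s c hz)
  refine tsat_exs_of_tsat_updateSeq RI DI z c _ X ⟨⟨?const, ?meet⟩, ?avoid⟩
  case const =>
    show DI false M _
    rw [hDI₀]
    rintro _ ⟨_, ⟨s, -, rfl⟩, rfl⟩ _ ⟨_, ⟨s', -, rfl⟩, rfl⟩
    exact (hzc s).trans (hzc s').symm
  case meet =>
    show DI true M _
    rw [hDI₁]
    refine ⟨_, ⟨_, ⟨s₀, hs₀, rfl⟩, rfl⟩, ?_⟩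
    simp only [Fin.append_left, Fin.append_right, hx]
    exact hzc s₀
  case avoid =>
    rintro _ ⟨s, hs, rfl⟩ hzy'
    refine hmiss s hs ?_
    simpa only [hzc, hy] using hzy'

lemma exists_of_tsat_negInclusion (hDI₀ : DI false = ConstD k) (hDI₁ : DI true = IntersectD k)
    (hzx : ∀ i j, z i ≠ x j) (hzy : ∀ i j, z i ≠ y j)
    (h : tsat RI DI (TForm.exs z (negInclusionBody x y z)) X) :
    ∃ s ∈ X, ∀ s' ∈ X, (fun i => s (x i)) ≠ fun i => s' (y i) := by
  obtain ⟨Y, ⟨⟨hconst, hmeet⟩, havoid⟩, hproj, hlift⟩ := exists_tsat_of_tsat_exs RI DI z _ X h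
  change DI false M _ at hconst
  change DI true M _ at hmeet
  rw [hDI₀] at hconst
  rw [hDI₁] at hmeet
  obtain ⟨_, ⟨t₀, ht₀, rfl⟩, hmeet⟩ := hmeet
  obtain ⟨s, hs, hts⟩ := hproj t₀ ht₀
  refine ⟨s, hs, fun s' hs' hxy => ?_⟩
  obtain ⟨t', ht', ht's⟩ := hlift s' hs'
  refine havoid t' ht' (funext fun i => ?_)
  have hmeet_i := congrFun hmeet i
  simp only [Fin.append_left, Fin.append_right] at hmeet_i
  calc t' (z i) = t₀ (z i) := (congrFun (hconst _ ⟨t₀, ht₀, rfl⟩ _ ⟨t', ht', rfl⟩) i).symm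
    _ = t₀ (x i) := hmeet_i
    _ = s (x i) := hts _ fun ⟨j, hj⟩ => hzx j i hj
    _ = s' (y i) := congrFun hxy i
    _ = t' (y i) := (ht's _ fun ⟨j, hj⟩ => hzy j i hj).symm

end NegInclusion

theorem neg_inclusion_def {σ : Type} {ar : σ → ℕ} {M : Type}
    (RI : ∀ r : σ, Set (Fin (ar r) → M))
    {k : ℕ} (x y z : Fin k → ℕ) (hz : Function.Injective z)
    (hzx : ∀ i j, z i ≠ x j) (hzy : ∀ i j, z i ≠ y j)
    (X : Team M) :
    (∃ s ∈ X, ∀ s' ∈ X, (fun i => s (x i)) ≠ fun i => s' (y i)) ↔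
    tsat RI (fun b : Bool => match b with
        | false => ConstD k | true => IntersectD k)
      (TForm.exs (dar := fun b => cond b (k + k) k) z
        (.and (.and (.dep false z) (.dep true (Fin.append z x))) (.neq k z y))) X :=
  ⟨tsat_negInclusion_of_exists RI x y z X rfl rfl hz hzx hzy,
    exists_of_tsat_negInclusion RI x y z X rfl rfl hzx hzy⟩
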